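/- arXiv:1303.5835 — 3 statements merged into one kernel-verified Lean document; each statement's English description precedes it below -/
import Mathlib

section
/- Let u : P₂(ℝ^d) → ℝ be differentiable (in the lifted/Lions sense) at every measure, with derivative ∂u(μ)(·). Then for every integer N ≥ 1 the empirical projection ū^N : (ℝ^d)^N → ℝ, ū^N(x₁,…,x_N) = u(N⁻¹ Σ_{j=1}^N δ_{x_j}), is differentiable on (ℝ^d)^N and, for every i ∈ {1,…,N} and every x = (x₁,…,x_N) ∈ (ℝ^d)^N, its partial gradient is ∂_{x_i} ū^N(x₁,…,x_N) = (1/N) ∂u(N⁻¹ Σ_{j=1}^N δ_{x_j})(x_i). -/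
/-!
Pick `N` distinct points `z_j` of `ℝ^d`. Richness of `Ω` gives a random variable with law
`empMeas z`, hence an index `J : Ω → Fin N` with uniform law. The linear map `T y = y ∘ J` from
`(ℝ^d)^N` to `L²(Ω; ℝ^d)` sends `y` to a random variable with law `empMeas y`, so `ū^N = ũ ∘ T`
and the chain rule gives the derivative `Dũ(T x) ∘ T`, whose value at `h` is
`E ⟪Du(μ)(x_J), h_J⟫ = N⁻¹ ∑ ⟪Du(μ)(x_i), h_i⟫`.
-/

open MeasureTheory ProbabilityTheory
open scoped ENNReal NNReal RealInnerProductSpace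

noncomputable section

/-- `ℝ^d`. -/
abbrev Rd (d : ℕ) := EuclideanSpace ℝ (Fin d)

/-- A Borel probability measure on `ℝ^d` of order 2 (finite second moment). -/
def IsP2 {d : ℕ} (μ : Measure (Rd d)) : Prop :=
  IsProbabilityMeasure μ ∧ Integrable (fun x => ‖x‖ ^ 2) μ

/-- The empirical measure `N⁻¹ ∑_{j} δ_{x_j}` of a point `x = (x₁,…,x_N) ∈ (ℝ^d)^N`. -/
def empMeas {d N : ℕ} (x : Fin N → Rd d) : Measure (Rd d) :=
  ((N : ℝ≥0∞))⁻¹ • ∑ j, Measure.dirac (x j)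

-- For `N = 0` this is the zero measure.
def uniformFin (N : ℕ) : Measure (Fin N) :=
  (N : ℝ≥0∞)⁻¹ • ∑ j, Measure.dirac j

lemma isProbabilityMeasure_uniformFin {N : ℕ} (hN : N ≠ 0) :
    IsProbabilityMeasure (uniformFin N) := by
  constructor
  simp [uniformFin, ENNReal.inv_mul_cancel (Nat.cast_ne_zero.mpr hN) (ENNReal.natCast_ne_top N)]

lemma map_uniformFin {α : Type*} [MeasurableSpace α] {N : ℕ} (y : Fin N → α) :
    (uniformFin N).map y = (N : ℝ≥0∞)⁻¹ • ∑ j, Measure.dirac (y j) := by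
  rw [uniformFin, Measure.map_smul, Measure.map_finset_sum' (measurable_of_finite y).aemeasurable]
  simp_rw [Measure.map_dirac' (measurable_of_finite y)]

lemma integral_uniformFin {E : Type*} [NormedAddCommGroup E] [NormedSpace ℝ E]
    [CompleteSpace E] {N : ℕ} (f : Fin N → E) :
    ∫ j, f j ∂uniformFin N = (N : ℝ)⁻¹ • ∑ j, f j := by
  rw [uniformFin, integral_smul_measure, integral_finsetSum_measure fun j _ => Integrable.of_finite]
  simp_rw [integral_dirac, ENNReal.toReal_inv, ENNReal.toReal_natCast]

lemma empMeas_eq_map_uniformFin {d N : ℕ} (y : Fin N → Rd d) :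
    empMeas y = (uniformFin N).map y :=
  (map_uniformFin y).symm

lemma isP2_empMeas {d N : ℕ} (hN : N ≠ 0) (y : Fin N → Rd d) : IsP2 (empMeas y) := by
  have := isProbabilityMeasure_uniformFin hN
  rw [empMeas_eq_map_uniformFin]
  exact ⟨Measure.isProbabilityMeasure_map (measurable_of_finite y).aemeasurable,
    (integrable_map_measure (by fun_prop) (measurable_of_finite y).aemeasurable).mpr
      Integrable.of_finite⟩

lemma measurableEmbedding_of_injective_of_finite {ι α : Type*} [MeasurableSpace ι]
    [DiscreteMeasurableSpace ι] [Finite ι] [MeasurableSpace α] [MeasurableSingletonClass α]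
    {z : ι → α} (hz : Function.Injective z) :
    MeasurableEmbedding z :=
  ⟨hz, measurable_of_finite z, fun s _ => (s.toFinite.image z).measurableSet⟩

lemma exists_measurable_map_eq_uniformFin {α Ω : Type*} [MeasurableSpace α]
    [MeasurableSingletonClass α] [MeasurableSpace Ω] {P : Measure Ω} {N : ℕ} (hN : N ≠ 0)
    {z : Fin N → α} (hz : Function.Injective z) {Z : Ω → α} (hZ : Measurable Z)
    (hlaw : P.map Z = (uniformFin N).map z) :
    ∃ J : Ω → Fin N, Measurable J ∧ P.map J = uniformFin N := by
  have : NeZero N := ⟨hN⟩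
  obtain ⟨g, hg, hgz⟩ := (measurableEmbedding_of_injective_of_finite hz).exists_measurable_extend
    measurable_id fun _ => ⟨0⟩
  refine ⟨g ∘ Z, hg.comp hZ, ?_⟩
  rw [← Measure.map_map hg hZ, hlaw, Measure.map_map hg (measurable_of_finite z), hgz,
    Measure.map_id]

lemma exists_measurable_map_eq_uniformFin_of_rich {Ω : Type*} [MeasurableSpace Ω]
    {P : Measure Ω} {d N : ℕ} [Nontrivial (Rd d)]
    (hrich : ∀ μ : Measure (Rd d), IsP2 μ → ∃ X : Lp (Rd d) 2 P, Measure.map (⇑X) P = μ)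
    (hN : N ≠ 0) :
    ∃ J : Ω → Fin N, Measurable J ∧ P.map J = uniformFin N := by
  have := Module.Free.infinite ℝ (Rd d)
  let z : Fin N → Rd d := Infinite.natEmbedding (Rd d) ∘ Fin.val
  obtain ⟨X, hX⟩ := hrich (empMeas z) (isP2_empMeas hN z)
  exact exists_measurable_map_eq_uniformFin hN
    ((Infinite.natEmbedding _).injective.comp Fin.val_injective)
    (Lp.stronglyMeasurable X).measurable (hX.trans (empMeas_eq_map_uniformFin z))

section precompLp

variable {Ω ι E : Type*} [MeasurableSpace Ω] (P : Measure Ω) [IsFiniteMeasure P]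
  [MeasurableSpace ι] [DiscreteMeasurableSpace ι] [Finite ι]
  [NormedAddCommGroup E] [NormedSpace ℝ E] [FiniteDimensional ℝ E]
  (p : ℝ≥0∞) [Fact (1 ≤ p)] {J : Ω → ι} (hJ : Measurable J)

def precompLp : (ι → E) →L[ℝ] Lp E p P :=
  LinearMap.toContinuousLinearMap
    { toFun := fun y =>
        (MemLp.of_discrete.comp_of_map hJ.aemeasurable : MemLp (y ∘ J) p P).toLp
      map_add' := fun _ _ => MemLp.toLp_add _ _
      map_smul' := fun c _ => MemLp.toLp_const_smul c _ }

lemma precompLp_ae_eq (y : ι → E) : precompLp P p hJ y =ᵐ[P] y ∘ J :=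
  MemLp.coeFn_toLp (MemLp.of_discrete.comp_of_map hJ.aemeasurable)

lemma map_precompLp [MeasurableSpace E] [BorelSpace E] (y : ι → E) :
    P.map (precompLp P p hJ y) = (P.map J).map y := by
  rw [Measure.map_congr (precompLp_ae_eq P p hJ y), Measure.map_map (measurable_of_finite y) hJ]

end precompLp

theorem empirical_projection_differentiable_general
    {d : ℕ} {Ω : Type} [MeasurableSpace Ω] (P : Measure Ω) [IsProbabilityMeasure P]
    (hrich : ∀ μ : Measure (Rd d), IsP2 μ →
      ∃ X : Lp (Rd d) 2 P, Measure.map (⇑X) P = μ)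
    (u : Measure (Rd d) → ℝ) (Du : Measure (Rd d) → Rd d → Rd d)
    (hdiff : ∀ X : Lp (Rd d) 2 P, ∃ L : Lp (Rd d) 2 P →L[ℝ] ℝ,
      HasFDerivAt (fun Y : Lp (Rd d) 2 P => u (Measure.map (⇑Y) P)) L X ∧
      ∀ Y : Lp (Rd d) 2 P, L Y = ∫ ω, ⟪Du (Measure.map (⇑X) P) (X ω), Y ω⟫ ∂P)
    (N : ℕ) (x : Fin N → Rd d) :
    ∃ L : (Fin N → Rd d) →L[ℝ] ℝ,
      HasFDerivAt (fun y : Fin N → Rd d => u (empMeas y)) L x ∧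
      ∀ h : Fin N → Rd d, L h = ∑ i, ⟪(N : ℝ)⁻¹ • Du (empMeas x) (x i), h i⟫ := by
  rcases subsingleton_or_nontrivial (Fin N → Rd d) with _ | _
  · exact ⟨0, hasFDerivAt_of_subsingleton _ _, fun h => by simp [Subsingleton.elim h 0]⟩
  obtain ⟨y₁, y₂, hne⟩ := exists_pair_ne (Fin N → Rd d)
  obtain ⟨i, hi⟩ := Function.ne_iff.mp hne
  have : Nontrivial (Rd d) := ⟨⟨y₁ i, y₂ i, hi⟩⟩
  obtain ⟨J, hJ, hJlaw⟩ := exists_measurable_map_eq_uniformFin_of_rich hrich i.pos.ne'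
  set T := precompLp (E := Rd d) P 2 hJ
  have hT : ∀ y, P.map (T y) = empMeas y := fun y => by
    rw [map_precompLp, hJlaw, empMeas_eq_map_uniformFin]
  obtain ⟨L, hL, hLT⟩ := hdiff (T x)
  refine ⟨L.comp T, ?_, fun h => ?_⟩
  · have hu : (fun y => u (empMeas y)) = (fun Y : Lp (Rd d) 2 P => u (P.map Y)) ∘ T := by
      funext y; simp only [Function.comp_apply, hT]
    exact hu ▸ hL.comp x T.hasFDerivAt
  · have hint : ∫ ω, ⟪Du (empMeas x) (T x ω), T h ω⟫ ∂P
        = ∫ j, ⟪Du (empMeas x) (x j), h j⟫ ∂uniformFin N := by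
      rw [← hJlaw, integral_map hJ.aemeasurable .of_discrete]
      refine integral_congr_ae ?_
      filter_upwards [precompLp_ae_eq P 2 hJ x, precompLp_ae_eq P 2 hJ h] with ω hx hh
      rw [hx, hh, Function.comp_apply, Function.comp_apply]
    rw [L.comp_apply, hLT, hT, hint, integral_uniformFin, Finset.smul_sum]
    simp_rw [real_inner_smul_left, smul_eq_mul]

/-- If `u : P₂(ℝ^d) → ℝ` is differentiable in the lifted (Lions) sense at
every measure, with derivative represented by the Borel maps `Du μ : ℝ^d → ℝ^d` (i.e. on an
atomless probability space `(Ω, P)` rich enough that every `μ ∈ P₂(ℝ^d)` is the law of an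
`L²` random variable, the lift `ũ(X) = u(P_X)` is Fréchet differentiable at every
`X ∈ L²(Ω;ℝ^d)` with derivative `Y ↦ E[⟪Du(P_X)(X), Y⟫]`), then for every `N ≥ 1` the
empirical projection `ū^N(x₁,…,x_N) = u(N⁻¹ ∑_j δ_{x_j})` is differentiable on `(ℝ^d)^N`
and its derivative at `x` acts on `h` as `∑_i ⟪(1/N) Du(μ̄^N_x)(x_i), h_i⟫`, i.e. the partial
gradient in `x_i` is `(1/N) Du(μ̄^N_x)(x_i)`. -/
theorem empirical_projection_differentiable
    {d : ℕ} {Ω : Type} [MeasurableSpace Ω] (P : Measure Ω) [IsProbabilityMeasure P]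
    (hrich : ∀ μ : Measure (Rd d), IsP2 μ →
      ∃ X : Lp (Rd d) 2 P, Measure.map (⇑X) P = μ)
    (u : Measure (Rd d) → ℝ) (Du : Measure (Rd d) → Rd d → Rd d)
    (hBorel : ∀ μ : Measure (Rd d), Measurable (Du μ))
    (hdiff : ∀ X : Lp (Rd d) 2 P, ∃ L : Lp (Rd d) 2 P →L[ℝ] ℝ,
      HasFDerivAt (fun Y : Lp (Rd d) 2 P => u (Measure.map (⇑Y) P)) L X ∧
      ∀ Y : Lp (Rd d) 2 P, L Y = ∫ ω, ⟪Du (Measure.map (⇑X) P) (X ω), Y ω⟫ ∂P)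
    (N : ℕ) (hN : 1 ≤ N) (x : Fin N → Rd d) :
    ∃ L : (Fin N → Rd d) →L[ℝ] ℝ,
      HasFDerivAt (fun y : Fin N → Rd d => u (empMeas y)) L x ∧
      ∀ h : Fin N → Rd d, L h = ∑ i, ⟪(N : ℝ)⁻¹ • Du (empMeas x) (x i), h i⟫ :=
  empirical_projection_differentiable_general P hrich u Du hdiff N x
end
end

section
/- Let h : P₂(ℝ^d) → ℝ be differentiable (in the lifted/Lions sense) and c-Lipschitz continuous with respect to the 2-Wasserstein distance, i.e. |h(μ) − h(ν)| ≤ c W₂(μ,ν) for all μ, ν ∈ P₂(ℝ^d). Then for every μ ∈ P₂(ℝ^d) and every random variable X with law μ, E[|∂h(μ)(X)|²]^{1/2} ≤ c. -/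
open MeasureTheory ProbabilityTheory
open scoped ENNReal NNReal RealInnerProductSpace

noncomputable section

/-- A coupling of `μ` and `ν`: a probability measure on `ℝ^d × ℝ^d` with marginals `μ`, `ν`. -/
def IsCoupling {d : ℕ} (π : Measure (Rd d × Rd d)) (μ ν : Measure (Rd d)) : Prop :=
  IsProbabilityMeasure π ∧ π.map Prod.fst = μ ∧ π.map Prod.snd = ν

/-- The 2-Wasserstein distance between two measures on `ℝ^d`. -/
def W2 {d : ℕ} (μ ν : Measure (Rd d)) : ℝ :=
  sInf { r : ℝ | ∃ π : Measure (Rd d × Rd d), IsCoupling π μ ν ∧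
      r = (∫ p, ‖p.1 - p.2‖ ^ 2 ∂π) ^ (1/2 : ℝ) }

open Filter Topology

/-! Lifting `h` to `L²(Ω)` turns Wasserstein-Lipschitz continuity into ordinary Lipschitz
continuity, because the joint law of `(Y, Z)` couples the laws of `Y` and `Z` at cost
`‖Y - Z‖₂²`. Hence the Fréchet derivative `L` at `X` has operator norm at most `c`. Since
`∂h(μ)(X)` represents `L` through the `L²` pairing, its `L²` norm is at most `‖L‖`. -/

section Lp

variable {Ω E : Type*} [MeasurableSpace Ω] {P : Measure Ω}
  [NormedAddCommGroup E] [InnerProductSpace ℝ E]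

lemma MeasureTheory.Lp.norm_sq_eq_integral_norm_sq (F : Lp E 2 P) :
    ‖F‖ ^ 2 = ∫ ω, ‖F ω‖ ^ 2 ∂P := by
  simp only [← real_inner_self_eq_norm_sq, L2.inner_def]

lemma toReal_eLpNorm_two_eq_sqrt_integral {f : Ω → E} (hf : AEStronglyMeasurable f P) :
    (eLpNorm f 2 P).toReal = Real.sqrt (∫ ω, ‖f ω‖ ^ 2 ∂P) := by
  by_cases hf2 : MemLp f 2 P
  · rw [← Lp.norm_toLp f hf2, ← Real.sqrt_sq (norm_nonneg _), Lp.norm_sq_eq_integral_norm_sq]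
    refine congrArg Real.sqrt (integral_congr_ae ?_)
    filter_upwards [hf2.coeFn_toLp] with ω hω
    rw [hω]
  · have hinf : eLpNorm f 2 P = ∞ := by
      by_contra h
      exact hf2 ⟨hf, lt_top_iff_ne_top.2 h⟩
    rw [hinf, integral_undef ((memLp_two_iff_integrable_sq_norm hf).not.1 hf2)]
    simp

lemma ContinuousLinearMap.norm_le_opNorm_of_apply_eq_norm_sq {F : Type*}
    [SeminormedAddCommGroup F] [NormedSpace ℝ F] (L : F →L[ℝ] ℝ) {x : F}
    (hx : L x = ‖x‖ ^ 2) : ‖x‖ ≤ ‖L‖ := by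
  have : ‖x‖ ^ 2 ≤ ‖L‖ * ‖x‖ := hx ▸ (le_abs_self _).trans (L.le_opNorm x)
  nlinarith [norm_nonneg x, norm_nonneg L]

/-- Truncating `f` at level `n` gives an `L²` function `g` with `L g = ‖g‖²`, hence
`‖g‖ ≤ ‖L‖`; Fatou's lemma passes the bound to `f`. -/
lemma eLpNorm_two_le_opNorm_of_apply_eq_integral_inner [IsFiniteMeasure P] {f : Ω → E}
    (hf : AEStronglyMeasurable f P) (L : Lp E 2 P →L[ℝ] ℝ)
    (hL : ∀ Y : Lp E 2 P, L Y = ∫ ω, ⟪f ω, Y ω⟫ ∂P) :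
    eLpNorm f 2 P ≤ ENNReal.ofReal ‖L‖ := by
  set g : ℕ → Ω → E := fun n => {ω | ‖f ω‖ ≤ n}.indicator f
  have hg_meas (n : ℕ) : AEStronglyMeasurable (g n) P :=
    hf.indicator₀ (hf.norm.nullMeasurableSet_le aestronglyMeasurable_const)
  have hg_bound (n : ℕ) : eLpNorm (g n) 2 P ≤ ENNReal.ofReal ‖L‖ := by
    have hg2 : MemLp (g n) 2 P := MemLp.of_bound (hg_meas n) n <| ae_of_all _ fun ω => by
      by_cases hω : ‖f ω‖ ≤ n <;> simp [g, hω]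
    have hLg : L (hg2.toLp _) = ‖hg2.toLp _‖ ^ 2 := by
      rw [hL, Lp.norm_sq_eq_integral_norm_sq]
      refine integral_congr_ae ?_
      filter_upwards [hg2.coeFn_toLp] with ω hω
      rw [hω, ← real_inner_self_eq_norm_sq]
      by_cases hω : ‖f ω‖ ≤ n <;> simp [g, hω]
    have := L.norm_le_opNorm_of_apply_eq_norm_sq hLg
    rwa [Lp.norm_toLp, ← ENNReal.le_ofReal_iff_toReal_le hg2.eLpNorm_ne_top (norm_nonneg _)]
      at this
  have hg_tendsto : ∀ ω, Tendsto (fun n => g n ω) atTop (𝓝 (f ω)) := fun ω => by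
    obtain ⟨N, hN⟩ := exists_nat_ge ‖f ω‖
    refine tendsto_const_nhds.congr' (eventually_atTop.2 ⟨N, fun n hn => ?_⟩)
    have : ‖f ω‖ ≤ n := hN.trans (Nat.cast_le.2 hn)
    simp [g, this]
  calc eLpNorm f 2 P ≤ atTop.liminf fun n => eLpNorm (g n) 2 P :=
        Lp.eLpNorm_lim_le_liminf_eLpNorm hg_meas f (ae_of_all _ hg_tendsto)
    _ ≤ ENNReal.ofReal ‖L‖ := liminf_le_of_frequently_le' (Frequently.of_forall hg_bound)

end Lp

section Wasserstein

variable {d : ℕ} {Ω : Type*} [MeasurableSpace Ω] {P : Measure Ω} [IsProbabilityMeasure P]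

lemma W2_le_of_isCoupling {μ ν : Measure (Rd d)} {π : Measure (Rd d × Rd d)}
    (hπ : IsCoupling π μ ν) : W2 μ ν ≤ (∫ p, ‖p.1 - p.2‖ ^ 2 ∂π) ^ (1/2 : ℝ) :=
  csInf_le ⟨0, by rintro _ ⟨π', -, rfl⟩; positivity⟩ ⟨π, hπ, rfl⟩

lemma isCoupling_map_prodMk {Y Z : Ω → Rd d} (hY : AEMeasurable Y P) (hZ : AEMeasurable Z P) :
    IsCoupling (P.map fun ω => (Y ω, Z ω)) (P.map Y) (P.map Z) :=
  ⟨Measure.isProbabilityMeasure_map (hY.prodMk hZ), Measure.fst_map_prodMk₀ hZ,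
    Measure.snd_map_prodMk₀ hY⟩

lemma isP2_map (Y : Lp (Rd d) 2 P) : IsP2 (P.map Y) := by
  have hY : AEMeasurable Y P := (Lp.aestronglyMeasurable Y).aemeasurable
  refine ⟨Measure.isProbabilityMeasure_map hY, ?_⟩
  rw [integrable_map_measure (by fun_prop) hY]
  exact (memLp_two_iff_integrable_sq_norm (Lp.aestronglyMeasurable Y)).1 (Lp.memLp Y)

lemma W2_map_le_norm_sub (Y Z : Lp (Rd d) 2 P) : W2 (P.map Y) (P.map Z) ≤ ‖Y - Z‖ := by
  have hY : AEMeasurable Y P := (Lp.aestronglyMeasurable Y).aemeasurable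
  have hZ : AEMeasurable Z P := (Lp.aestronglyMeasurable Z).aemeasurable
  have hcost : ∫ p, ‖p.1 - p.2‖ ^ 2 ∂(P.map fun ω => (Y ω, Z ω)) = ‖Y - Z‖ ^ 2 := by
    rw [integral_map (hY.prodMk hZ) (by fun_prop), Lp.norm_sq_eq_integral_norm_sq]
    refine integral_congr_ae ?_
    filter_upwards [Lp.coeFn_sub Y Z] with ω hω
    rw [hω, Pi.sub_apply]
  calc W2 (P.map Y) (P.map Z) ≤ _ := W2_le_of_isCoupling (isCoupling_map_prodMk hY hZ)
    _ = ‖Y - Z‖ := by rw [hcost, ← Real.sqrt_eq_rpow, Real.sqrt_sq (norm_nonneg _)]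

lemma lipschitzWith_comp_map_of_W2 {h : Measure (Rd d) → ℝ} {c : ℝ} (hc : 0 ≤ c)
    (hLip : ∀ μ ν : Measure (Rd d), IsP2 μ → IsP2 ν → |h μ - h ν| ≤ c * W2 μ ν) :
    LipschitzWith c.toNNReal fun Y : Lp (Rd d) 2 P => h (P.map Y) := by
  refine LipschitzWith.of_dist_le_mul fun Y Z => ?_
  rw [Real.dist_eq, Real.coe_toNNReal c hc, dist_eq_norm]
  exact (hLip _ _ (isP2_map Y) (isP2_map Z)).trans
    (mul_le_mul_of_nonneg_left (W2_map_le_norm_sub Y Z) hc)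

end Wasserstein

theorem gradient_bound_of_wasserstein_lipschitz_general
    {d : ℕ} {Ω : Type} [MeasurableSpace Ω] (P : Measure Ω) [IsProbabilityMeasure P]
    (h : Measure (Rd d) → ℝ) (Dh : Measure (Rd d) → Rd d → Rd d)
    (hBorel : ∀ μ : Measure (Rd d), Measurable (Dh μ))
    (hdiff : ∀ X : Lp (Rd d) 2 P, ∃ L : Lp (Rd d) 2 P →L[ℝ] ℝ,
      HasFDerivAt (fun Y : Lp (Rd d) 2 P => h (Measure.map (⇑Y) P)) L X ∧
      ∀ Y : Lp (Rd d) 2 P, L Y = ∫ ω, ⟪Dh (Measure.map (⇑X) P) (X ω), Y ω⟫ ∂P)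
    (c : ℝ) (hc : 0 ≤ c)
    (hLip : ∀ μ ν : Measure (Rd d), IsP2 μ → IsP2 ν → |h μ - h ν| ≤ c * W2 μ ν)
    (μ : Measure (Rd d))
    (X : Ω → Rd d) (hX2 : MemLp X 2 P)
    (hXlaw : Measure.map X P = μ) :
    Real.sqrt (∫ ω, ‖Dh μ (X ω)‖ ^ 2 ∂P) ≤ c := by
  have hlaw : P.map (hX2.toLp X) = μ := by rw [Measure.map_congr hX2.coeFn_toLp, hXlaw]
  obtain ⟨L, hL, hLrep⟩ := hdiff (hX2.toLp X)
  have hLnorm : ‖L‖ ≤ c := by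
    simpa [hc] using hL.le_of_lipschitz (lipschitzWith_comp_map_of_W2 hc hLip)
  have hLX (Y : Lp (Rd d) 2 P) : L Y = ∫ ω, ⟪Dh μ (X ω), Y ω⟫ ∂P := by
    rw [hLrep, hlaw]
    refine integral_congr_ae ?_
    filter_upwards [hX2.coeFn_toLp] with ω hω
    rw [hω]
  have hDhX : AEStronglyMeasurable (fun ω => Dh μ (X ω)) P :=
    ((hBorel μ).comp_aemeasurable hX2.1.aemeasurable).aestronglyMeasurable
  calc Real.sqrt (∫ ω, ‖Dh μ (X ω)‖ ^ 2 ∂P)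
      = (eLpNorm (fun ω => Dh μ (X ω)) 2 P).toReal :=
        (toReal_eLpNorm_two_eq_sqrt_integral hDhX).symm
    _ ≤ ‖L‖ := ENNReal.toReal_le_of_le_ofReal (norm_nonneg _)
        (eLpNorm_two_le_opNorm_of_apply_eq_integral_inner hDhX L hLX)
    _ ≤ c := hLnorm

/-- If `h : P₂(ℝ^d) → ℝ` is differentiable in the lifted (Lions) sense, with
derivative represented by the Borel maps `Dh μ : ℝ^d → ℝ^d`, and `h` is `c`-Lipschitz
continuous with respect to the 2-Wasserstein distance, then for every `μ ∈ P₂(ℝ^d)` and every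
square-integrable random variable `X` with law `μ`, `E[|Dh(μ)(X)|²]^{1/2} ≤ c`. -/
theorem gradient_bound_of_wasserstein_lipschitz
    {d : ℕ} {Ω : Type} [MeasurableSpace Ω] (P : Measure Ω) [IsProbabilityMeasure P]
    (hrich : ∀ μ : Measure (Rd d), IsP2 μ →
      ∃ X : Lp (Rd d) 2 P, Measure.map (⇑X) P = μ)
    (h : Measure (Rd d) → ℝ) (Dh : Measure (Rd d) → Rd d → Rd d)
    (hBorel : ∀ μ : Measure (Rd d), Measurable (Dh μ))
    (hdiff : ∀ X : Lp (Rd d) 2 P, ∃ L : Lp (Rd d) 2 P →L[ℝ] ℝ,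
      HasFDerivAt (fun Y : Lp (Rd d) 2 P => h (Measure.map (⇑Y) P)) L X ∧
      ∀ Y : Lp (Rd d) 2 P, L Y = ∫ ω, ⟪Dh (Measure.map (⇑X) P) (X ω), Y ω⟫ ∂P)
    (c : ℝ) (hc : 0 ≤ c)
    (hLip : ∀ μ ν : Measure (Rd d), IsP2 μ → IsP2 ν → |h μ - h ν| ≤ c * W2 μ ν)
    (μ : Measure (Rd d)) (hμ : IsP2 μ)
    (X : Ω → Rd d) (hX : Measurable X) (hX2 : MemLp X 2 P)
    (hXlaw : Measure.map X P = μ) :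
    Real.sqrt (∫ ω, ‖Dh μ (X ω)‖ ^ 2 ∂P) ≤ c :=
  gradient_bound_of_wasserstein_lipschitz_general P h Dh hBorel hdiff c hc hLip μ X hX2 hXlaw
end
end

section
/- Let μ be a Borel probability measure on ℝ^d with a strictly positive, continuously differentiable density p such that p and its first-order partial derivatives decay exponentially at infinity. Let w : ℝ^d → ℝ^d be continuously differentiable and suppose there is a constant C such that, for every pair of square-integrable random variables ξ, ξ' defined on a common atomless probability space and both having law μ, one has E[|w(ξ) − w(ξ')|²] ≤ C² E[|ξ − ξ'|²]. Then |Dw(x)e| ≤ C for every x ∈ ℝ^d and every unit vector e ∈ ℝ^d; in particular, w is C-Lipschitz continuous on ℝ^d. -/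
/-!
Test the hypothesis on the coupling of `μ` with itself that keeps `ξ = ξ'` outside a bounded set
`A` and draws `ξ, ξ'` independently from `μ` restricted to `A` inside it: the integral of
`‖w a - w b‖²` over `A × A` is then at most `C²` times that of `‖a - b‖²`. Any coupling is
admissible once an independent uniform coordinate is adjoined, which makes the probability space
atomless, and the second moment of `μ` is finite by the exponential decay of `p`.

For `A` the union of two small balls around `x` and `y`, the pairs with one point in each ball
carry a fixed proportion of the mass, because `p` is continuous and positive, while pairs inside
one ball contribute only `O(r²)`. Letting the radius tend to zero gives
`‖w x - w y‖ ≤ C ‖x - y‖`, and the derivative bound follows from the Lipschitz bound.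
-/

open MeasureTheory ProbabilityTheory
open scoped ENNReal NNReal

noncomputable section

/-- A measure is atomless: every set of positive measure contains a measurable subset of
strictly smaller positive measure. -/
def AtomlessMeasure {Ω : Type} [MeasurableSpace Ω] (P : Measure Ω) : Prop :=
  ∀ s : Set Ω, MeasurableSet s → 0 < P s → ∃ t : Set Ω,
    MeasurableSet t ∧ t ⊆ s ∧ 0 < P t ∧ P t < P s

open Set Metric Topology

theorem pow_le_factorial_div_pow_mul_exp (n : ℕ) {ε x : ℝ} (hε : 0 < ε) (hx : 0 ≤ x) :
    x ^ n ≤ n.factorial / ε ^ n * Real.exp (ε * x) := by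
  have h := Real.pow_div_factorial_le_exp _ (mul_nonneg hε.le hx) n
  rw [mul_pow, div_le_iff₀ (by positivity)] at h
  rw [div_mul_eq_mul_div, le_div_iff₀ (by positivity)]
  linarith

theorem integrable_one_add_norm_pow_mul_exp_neg_norm {E : Type*} [NormedAddCommGroup E]
    [NormedSpace ℝ E] [FiniteDimensional ℝ E] [MeasurableSpace E] [BorelSpace E]
    (μ : Measure E) [μ.IsAddHaarMeasure] (n : ℕ) {ε : ℝ} (hε : 0 < ε) :
    Integrable (fun x : E => (1 + ‖x‖) ^ n * Real.exp (-ε * ‖x‖)) μ := by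
  set k := Module.finrank ℝ E + 1
  have hk : (Module.finrank ℝ E : ℝ) < k := by simp [k]
  refine ((integrable_one_add_norm (μ := μ) hk).const_mul
    ((n + k).factorial / ε ^ (n + k) * Real.exp ε)).mono' (by fun_prop) ?_
  refine .of_forall fun x => ?_
  have h1 : 0 < 1 + ‖x‖ := by positivity
  rw [Real.norm_of_nonneg (by positivity), Real.rpow_neg h1.le, Real.rpow_natCast,
    ← div_eq_mul_inv, le_div_iff₀ (by positivity), mul_right_comm, ← pow_add]
  calc (1 + ‖x‖) ^ (n + k) * Real.exp (-ε * ‖x‖)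
      ≤ (n + k).factorial / ε ^ (n + k) * Real.exp (ε * (1 + ‖x‖)) * Real.exp (-ε * ‖x‖) := by
        gcongr
        exact pow_le_factorial_div_pow_mul_exp _ hε h1.le
    _ = (n + k).factorial / ε ^ (n + k) * Real.exp ε := by
        rw [mul_assoc, ← Real.exp_add]; ring_nf

theorem memLp_two_id_withDensity_of_le_exp {E : Type*} [NormedAddCommGroup E]
    [NormedSpace ℝ E] [FiniteDimensional ℝ E] [MeasurableSpace E] [BorelSpace E]
    (μ : Measure E) [μ.IsAddHaarMeasure] {p : E → ℝ} (hp : Measurable p) (hp0 : ∀ x, 0 ≤ p x)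
    {c ε : ℝ} (hε : 0 < ε) (hdecay : ∀ x, p x ≤ c * Real.exp (-ε * ‖x‖)) :
    MemLp id 2 (μ.withDensity fun x => ENNReal.ofReal (p x)) := by
  rw [memLp_two_iff_integrable_sq_norm aestronglyMeasurable_id,
    integrable_withDensity_iff hp.ennreal_ofReal (.of_forall fun _ => ENNReal.ofReal_lt_top)]
  refine ((integrable_one_add_norm_pow_mul_exp_neg_norm μ 2 hε).const_mul c).mono'
    (by fun_prop) (.of_forall fun x => ?_)
  rw [ENNReal.toReal_ofReal (hp0 x), id,
    Real.norm_of_nonneg (mul_nonneg (by positivity) (hp0 x))]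
  calc ‖x‖ ^ 2 * p x ≤ (1 + ‖x‖) ^ 2 * (c * Real.exp (-ε * ‖x‖)) := by
        have : ‖x‖ ≤ 1 + ‖x‖ := by linarith
        exact mul_le_mul (by gcongr) (hdecay x) (hp0 x) (by positivity)
    _ = c * ((1 + ‖x‖) ^ 2 * Real.exp (-ε * ‖x‖)) := by ring

section UniformCoordinate

variable {α : Type*} [MeasurableSpace α] (P : Measure α)

theorem prod_uniform_apply_snd_preimage {S : Set ℝ} (hS : MeasurableSet S) :
    P.prod (volume.restrict (Icc 0 1)) (Prod.snd ⁻¹' S) = P univ * volume (S ∩ Icc 0 1) := by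
  rw [← univ_prod, Measure.prod_prod, Measure.restrict_apply hS]

theorem lipschitzWith_prod_uniform_inter_snd_preimage_Iic [IsFiniteMeasure P] (s : Set (α × ℝ)) :
    LipschitzWith (P.real univ).toNNReal
      fun r => (P.prod (volume.restrict (Icc 0 1))).real (s ∩ Prod.snd ⁻¹' Iic r) := by
  refine LipschitzWith.of_le_add_mul' _ fun a b => ?_
  rcases le_total a b with hab | hba
  · have : (P.prod (volume.restrict (Icc 0 1))).real (s ∩ Prod.snd ⁻¹' Iic a) ≤
        (P.prod (volume.restrict (Icc 0 1))).real (s ∩ Prod.snd ⁻¹' Iic b) :=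
      measureReal_mono (by gcongr)
    nlinarith [dist_nonneg (x := a) (y := b), measureReal_nonneg (μ := P) (s := univ)]
  · have hsub : s ∩ Prod.snd ⁻¹' Iic a ⊆ (s ∩ Prod.snd ⁻¹' Iic b) ∪ Prod.snd ⁻¹' Ioc b a := by
      rintro z ⟨hz, hza⟩
      rcases le_or_gt z.2 b with h | h
      · exact Or.inl ⟨hz, h⟩
      · exact Or.inr ⟨h, hza⟩
    have hslab : (P.prod (volume.restrict (Icc 0 1))).real (Prod.snd ⁻¹' Ioc b a) ≤
        P.real univ * dist a b := by
      rw [measureReal_def, prod_uniform_apply_snd_preimage P measurableSet_Ioc,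
        ENNReal.toReal_mul, ← measureReal_def, ← measureReal_def, Real.dist_eq,
        abs_of_nonneg (by linarith), ← Real.volume_real_Ioc_of_le hba]
      exact mul_le_mul_of_nonneg_left (measureReal_mono inter_subset_left measure_Ioc_lt_top.ne)
        measureReal_nonneg
    exact (measureReal_mono hsub).trans ((measureReal_union_le _ _).trans (by gcongr))

end UniformCoordinate

theorem atomlessMeasure_prod_uniform {α : Type} [MeasurableSpace α] (P : Measure α)
    [IsFiniteMeasure P] : AtomlessMeasure (P.prod (volume.restrict (Icc (0 : ℝ) 1))) := by
  set R := P.prod (volume.restrict (Icc (0 : ℝ) 1))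
  intro s hs hs0
  -- cut `s` at a height below which half of its mass lies
  set F : ℝ → ℝ := fun r => R.real (s ∩ Prod.snd ⁻¹' Iic r)
  have hF0 : F (-1) = 0 := by
    refine measureReal_mono_null inter_subset_right ?_
    rw [measureReal_def, prod_uniform_apply_snd_preimage P measurableSet_Iic,
      (disjoint_left (s := Iic (-1 : ℝ)).2 fun x (hx : x ≤ -1) hx' => by
        linarith [hx'.1]).inter_eq]
    simp
  have hF1 : F 1 = R.real s := by
    simp only [F, measureReal_def]
    rw [measure_inter_conull]
    rw [← preimage_compl, compl_Iic, prod_uniform_apply_snd_preimage P measurableSet_Ioi,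
      (disjoint_left (s := Ioi (1 : ℝ)).2 fun x (hx : 1 < x) hx' => by
        linarith [hx'.2]).inter_eq]
    simp
  have hhalf : 0 < R.real s / 2 := half_pos (ENNReal.toReal_pos hs0.ne' (by finiteness))
  obtain ⟨r, -, hr⟩ := intermediate_value_Icc (f := F) (by norm_num : (-1 : ℝ) ≤ 1)
    (lipschitzWith_prod_uniform_inter_snd_preimage_Iic P s).continuous.continuousOn
    (show R.real s / 2 ∈ Icc (F (-1)) (F 1) by rw [hF0, hF1]; constructor <;> linarith)
  refine ⟨s ∩ Prod.snd ⁻¹' Iic r, hs.inter (measurable_snd measurableSet_Iic),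
    inter_subset_left, pos_iff_ne_zero.2 fun h => ?_, ?_⟩
  · have : F r = 0 := by simp only [F, measureReal_def, h, ENNReal.toReal_zero]
    linarith
  · refine (ENNReal.toReal_lt_toReal (by finiteness) (by finiteness)).1 ?_
    change F r < R.real s
    linarith

/-- Keeps points outside `A` in place and redraws both coordinates independently inside `A`. -/
def squareCoupling {α : Type*} [MeasurableSpace α] (μ : Measure α) (A : Set α) :
    Measure (α × α) :=
  (μ.restrict Aᶜ).map Function.diag + (μ A)⁻¹ • (μ.prod μ).restrict (A ×ˢ A)

section squareCoupling

variable {α : Type*} [MeasurableSpace α] {μ : Measure α} [IsFiniteMeasure μ] {A : Set α}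

theorem map_fst_squareCoupling (hA : MeasurableSet A) (hA0 : μ A ≠ 0) :
    (squareCoupling μ A).map Prod.fst = μ := by
  rw [squareCoupling, Measure.map_add _ _ measurable_fst,
    Measure.map_map measurable_fst measurable_diag, Measure.map_smul,
    ← Measure.prod_restrict, Measure.map_fst_prod, Measure.restrict_apply_univ, smul_smul,
    ENNReal.inv_mul_cancel hA0 (measure_ne_top μ A), one_smul,
    show Prod.fst ∘ Function.diag = (id : α → α) from rfl, Measure.map_id, add_comm,
    Measure.restrict_add_restrict_compl hA]

theorem map_snd_squareCoupling (hA : MeasurableSet A) (hA0 : μ A ≠ 0) :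
    (squareCoupling μ A).map Prod.snd = μ := by
  rw [squareCoupling, Measure.map_add _ _ measurable_snd,
    Measure.map_map measurable_snd measurable_diag, Measure.map_smul,
    ← Measure.prod_restrict, Measure.map_snd_prod, Measure.restrict_apply_univ, smul_smul,
    ENNReal.inv_mul_cancel hA0 (measure_ne_top μ A), one_smul,
    show Prod.snd ∘ Function.diag = (id : α → α) from rfl, Measure.map_id, add_comm,
    Measure.restrict_add_restrict_compl hA]

theorem integral_squareCoupling {f : α × α → ℝ} (hf : Measurable f) (hdiag : ∀ a, f (a, a) = 0)
    (hA0 : μ A ≠ 0) (hfA : IntegrableOn f (A ×ˢ A) (μ.prod μ)) :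
    ∫ z, f z ∂squareCoupling μ A = (μ A)⁻¹.toReal * ∫ z in A ×ˢ A, f z ∂μ.prod μ := by
  have hfdiag : Integrable f ((μ.restrict Aᶜ).map Function.diag) := by
    rw [integrable_map_measure hf.aestronglyMeasurable measurable_diag.aemeasurable]
    simp [Function.comp_def, hdiag]
  rw [squareCoupling, integral_add_measure hfdiag (hfA.smul_measure (ENNReal.inv_ne_top.2 hA0)),
    integral_map measurable_diag.aemeasurable hf.aestronglyMeasurable, integral_smul_measure]
  simp [hdiag]

end squareCoupling

theorem Continuous.integrableOn_of_isBounded {X : Type*} [MetricSpace X] [ProperSpace X]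
    [MeasurableSpace X] [OpensMeasurableSpace X] {ν : Measure X} [IsFiniteMeasureOnCompacts ν]
    {f : X → ℝ} (hf : Continuous f) {s : Set X} (hs : Bornology.IsBounded s) :
    IntegrableOn f s ν :=
  (hf.continuousOn.integrableOn_compact hs.isCompact_closure).mono_set subset_closure

def L2LipschitzOnCouplings {E F : Type} [NormedAddCommGroup E] [MeasurableSpace E]
    [NormedAddCommGroup F] (μ : Measure E) (w : E → F) (C : ℝ) : Prop :=
  ∀ (Ω : Type) (_ : MeasurableSpace Ω) (P : Measure Ω),
    IsProbabilityMeasure P → AtomlessMeasure P →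
    ∀ ξ ξ' : Ω → E, Measurable ξ → Measurable ξ' → MemLp ξ 2 P → MemLp ξ' 2 P →
      Measure.map ξ P = μ → Measure.map ξ' P = μ →
      ∫ ω, ‖w (ξ ω) - w (ξ' ω)‖ ^ 2 ∂P ≤ C ^ 2 * ∫ ω, ‖ξ ω - ξ' ω‖ ^ 2 ∂P

namespace L2LipschitzOnCouplings

variable {E F : Type} [NormedAddCommGroup E] [MeasurableSpace E] [NormedAddCommGroup F]
  {μ : Measure E} {w : E → F} {C : ℝ}

/-- Every coupling becomes admissible once it is made atomless by an independent uniform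
coordinate. -/
theorem integral_le (h : L2LipschitzOnCouplings μ w C) [OpensMeasurableSpace E]
    [SecondCountableTopology E] (hμ : MemLp id 2 μ) (π : Measure (E × E))
    [IsProbabilityMeasure π] (h₁ : π.map Prod.fst = μ) (h₂ : π.map Prod.snd = μ) :
    ∫ z, ‖w z.1 - w z.2‖ ^ 2 ∂π ≤ C ^ 2 * ∫ z, ‖z.1 - z.2‖ ^ 2 ∂π := by
  set Q := volume.restrict (Icc (0 : ℝ) 1)
  have : IsProbabilityMeasure Q := ⟨by simp [Q]⟩
  have hmap : ∀ {f : E × E → E}, Measurable f → π.map f = μ →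
      (π.prod Q).map (f ∘ Prod.fst) = μ := fun hf hπ => by
    rw [← Measure.map_map hf measurable_fst, Measure.map_fst_prod, measure_univ, one_smul, hπ]
  have hmem : ∀ {f : E × E → E}, Measurable f → π.map f = μ →
      MemLp (f ∘ Prod.fst) 2 (π.prod Q) := fun hf hπ =>
    (memLp_map_measure_iff aestronglyMeasurable_id (hf.comp measurable_fst).aemeasurable).1
      (by rw [hmap hf hπ]; exact hμ)
  have := h _ _ (π.prod Q) inferInstance (atomlessMeasure_prod_uniform π)
    (fun ω => ω.1.1) (fun ω => ω.1.2) (measurable_fst.comp measurable_fst)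
    (measurable_snd.comp measurable_fst) (hmem measurable_fst h₁) (hmem measurable_snd h₂)
    (hmap measurable_fst h₁) (hmap measurable_snd h₂)
  simpa only [integral_fun_fst (f := fun z : E × E => ‖w z.1 - w z.2‖ ^ 2),
    integral_fun_fst (f := fun z : E × E => ‖z.1 - z.2‖ ^ 2), probReal_univ,
    one_smul] using this

theorem setIntegral_square_le (h : L2LipschitzOnCouplings μ w C) [ProperSpace E] [BorelSpace E]
    [IsProbabilityMeasure μ] (hμ : MemLp id 2 μ) (hw : Continuous w) (A : Set E)
    (hA : MeasurableSet A) (hAb : Bornology.IsBounded A) (hA0 : μ A ≠ 0) :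
    ∫ z in A ×ˢ A, ‖w z.1 - w z.2‖ ^ 2 ∂μ.prod μ ≤
      C ^ 2 * ∫ z in A ×ˢ A, ‖z.1 - z.2‖ ^ 2 ∂μ.prod μ := by
  have : IsProbabilityMeasure (squareCoupling μ A) := ⟨by
    rw [← preimage_univ (f := Prod.fst), ← Measure.map_apply measurable_fst .univ,
      map_fst_squareCoupling hA hA0, measure_univ]⟩
  have hwc : Continuous fun z : E × E => ‖w z.1 - w z.2‖ ^ 2 := by fun_prop
  have hdc : Continuous fun z : E × E => ‖z.1 - z.2‖ ^ 2 := by fun_prop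
  have key := h.integral_le hμ (squareCoupling μ A) (map_fst_squareCoupling hA hA0)
    (map_snd_squareCoupling hA hA0)
  rw [integral_squareCoupling hwc.measurable (by simp) hA0 (hwc.integrableOn_of_isBounded
      (hAb.prod hAb)), integral_squareCoupling hdc.measurable (by simp) hA0
      (hdc.integrableOn_of_isBounded (hAb.prod hAb)), mul_left_comm] at key
  exact le_of_mul_le_mul_left key (ENNReal.toReal_pos (ENNReal.inv_ne_zero.2 (by finiteness))
    (ENNReal.inv_ne_top.2 hA0))

end L2LipschitzOnCouplings

theorem setIntegral_le_mul_measureReal_add {β : Type*} [MeasurableSpace β] {ν : Measure β}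
    [IsFiniteMeasure ν] {g : β → ℝ} {S X : Set β} (hS : MeasurableSet S) (hX : MeasurableSet X)
    (hXS : X ⊆ S) (hg : IntegrableOn g S ν) {L ρ : ℝ} (hρ : 0 ≤ ρ) (hgX : ∀ z ∈ X, g z ≤ L)
    (hgS : ∀ z ∈ S \ X, g z ≤ ρ) :
    ∫ z in S, g z ∂ν ≤ L * ν.real X + ρ * ν.real S := by
  have hbound : IntegrableOn (fun z => X.indicator (fun _ => L) z + ρ) S ν :=
    ((integrable_const _).indicator hX).add (integrable_const _)
  calc ∫ z in S, g z ∂ν ≤ ∫ z in S, (X.indicator (fun _ => L) z + ρ) ∂ν := by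
        refine setIntegral_mono_on hg hbound hS fun z hz => ?_
        by_cases hzX : z ∈ X
        · rw [indicator_of_mem hzX]; linarith [hgX z hzX]
        · rw [indicator_of_notMem hzX, zero_add]; exact hgS z ⟨hz, hzX⟩
    _ = L * ν.real X + ρ * ν.real S := by
        rw [integral_add ((integrable_const _).indicator hX) (integrable_const _),
          integral_indicator_const _ hX, measureReal_restrict_apply hX, inter_eq_left.2 hXS,
          setIntegral_const, smul_eq_mul, smul_eq_mul, mul_comm, mul_comm (ν.real S)]

theorem sq_mul_measureReal_le_of_setIntegral_le {E F : Type*} [NormedAddCommGroup E]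
    [MeasurableSpace E] [BorelSpace E] [ProperSpace E] [NormedAddCommGroup F]
    {μ : Measure E} [IsFiniteMeasure μ] {w : E → F} (hw : Continuous w) {S T : Set E}
    (hS : MeasurableSet S) (hT : MeasurableSet T) (hSb : Bornology.IsBounded S)
    (hTb : Bornology.IsBounded T) {C G L ρ : ℝ}
    (hsq : ∫ z in (S ∪ T) ×ˢ (S ∪ T), ‖w z.1 - w z.2‖ ^ 2 ∂μ.prod μ ≤
      C ^ 2 * ∫ z in (S ∪ T) ×ˢ (S ∪ T), ‖z.1 - z.2‖ ^ 2 ∂μ.prod μ)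
    (hG : 0 ≤ G) (hwST : ∀ u ∈ S, ∀ v ∈ T, G ≤ ‖w u - w v‖)
    (hST : ∀ u ∈ S, ∀ v ∈ T, ‖u - v‖ ≤ L) (hSρ : diam S ≤ ρ) (hTρ : diam T ≤ ρ) :
    G ^ 2 * (μ.prod μ).real (S ×ˢ T ∪ T ×ˢ S) ≤
      C ^ 2 * (L ^ 2 * (μ.prod μ).real (S ×ˢ T ∪ T ×ˢ S) + ρ ^ 2 * (μ.real S + μ.real T) ^ 2) := by
  set A := S ∪ T
  set X := S ×ˢ T ∪ T ×ˢ S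
  have hXA : X ⊆ A ×ˢ A := union_subset (prod_mono subset_union_left subset_union_right)
    (prod_mono subset_union_right subset_union_left)
  have hXm : MeasurableSet X := (hS.prod hT).union (hT.prod hS)
  have hAb : Bornology.IsBounded (A ×ˢ A) := (hSb.union hTb).prod (hSb.union hTb)
  have hfi : IntegrableOn (fun z : E × E => ‖w z.1 - w z.2‖ ^ 2) (A ×ˢ A) (μ.prod μ) :=
    (by fun_prop : Continuous _).integrableOn_of_isBounded hAb
  have hgi : IntegrableOn (fun z : E × E => ‖z.1 - z.2‖ ^ 2) (A ×ˢ A) (μ.prod μ) :=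
    (by fun_prop : Continuous _).integrableOn_of_isBounded hAb
  have hfX : ∀ z ∈ X, G ^ 2 ≤ ‖w z.1 - w z.2‖ ^ 2 := by
    rintro z (⟨h₁, h₂⟩ | ⟨h₁, h₂⟩)
    · exact pow_le_pow_left₀ hG (hwST _ h₁ _ h₂) 2
    · rw [norm_sub_rev]; exact pow_le_pow_left₀ hG (hwST _ h₂ _ h₁) 2
  have hgX : ∀ z ∈ X, ‖z.1 - z.2‖ ^ 2 ≤ L ^ 2 := by
    rintro z (⟨h₁, h₂⟩ | ⟨h₁, h₂⟩)
    · exact pow_le_pow_left₀ (norm_nonneg _) (hST _ h₁ _ h₂) 2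
    · rw [norm_sub_rev]; exact pow_le_pow_left₀ (norm_nonneg _) (hST _ h₂ _ h₁) 2
  have hgA : ∀ z ∈ A ×ˢ A \ X, ‖z.1 - z.2‖ ^ 2 ≤ ρ ^ 2 := by
    rintro z ⟨⟨h₁ | h₁, h₂ | h₂⟩, hzX⟩
    · rw [← dist_eq_norm]; gcongr; exact (dist_le_diam_of_mem hSb h₁ h₂).trans hSρ
    · exact absurd (Or.inl ⟨h₁, h₂⟩) hzX
    · exact absurd (Or.inr ⟨h₁, h₂⟩) hzX
    · rw [← dist_eq_norm]; gcongr; exact (dist_le_diam_of_mem hTb h₁ h₂).trans hTρ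
  have hsquare : (μ.prod μ).real (A ×ˢ A) ≤ (μ.real S + μ.real T) ^ 2 := by
    rw [measureReal_prod_prod, ← sq]
    gcongr
    exact measureReal_union_le _ _
  calc G ^ 2 * (μ.prod μ).real X ≤ ∫ z in A ×ˢ A, ‖w z.1 - w z.2‖ ^ 2 ∂μ.prod μ :=
        (setIntegral_ge_of_const_le_real hXm (by finiteness) hfX (hfi.mono_set hXA)).trans
          (setIntegral_mono_set hfi (.of_forall fun _ => by positivity) hXA.eventuallyLE)
    _ ≤ C ^ 2 * ∫ z in A ×ˢ A, ‖z.1 - z.2‖ ^ 2 ∂μ.prod μ := hsq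
    _ ≤ _ := by
        gcongr
        refine (setIntegral_le_mul_measureReal_add ((hS.union hT).prod (hS.union hT)) hXm hXA
          hgi (by positivity) hgX hgA).trans ?_
        gcongr

theorem le_mul_add_mul_sqrt_of_sq_mul_le {G L ρ C c m₁ m₂ a b : ℝ} (hG : 0 ≤ G) (hL : 0 ≤ L)
    (hρ : 0 ≤ ρ) (hC : 0 ≤ C) (hm₁ : 0 < m₁) (hm₂ : 0 < m₂) (hc : m₁ * m₂ ≤ c)
    (h₁₂ : m₁ ≤ a * m₂) (h₂₁ : m₂ ≤ b * m₁)
    (h : G ^ 2 * c ≤ C ^ 2 * (L ^ 2 * c + ρ ^ 2 * (m₁ + m₂) ^ 2)) :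
    G ≤ C * (L + ρ * √(a + b + 2)) := by
  have ha : 0 < a := pos_of_mul_pos_left (hm₁.trans_le h₁₂) hm₂.le
  have hb : 0 < b := pos_of_mul_pos_left (hm₂.trans_le h₂₁) hm₁.le
  have hmass : (m₁ + m₂) ^ 2 ≤ (a + b + 2) * (m₁ * m₂) := by
    nlinarith [mul_le_mul_of_nonneg_right h₁₂ hm₁.le, mul_le_mul_of_nonneg_right h₂₁ hm₂.le]
  have hsq : G ^ 2 ≤ C ^ 2 * (L ^ 2 + ρ ^ 2 * (a + b + 2)) := by
    by_contra! hlt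
    have hexcess : 0 ≤ G ^ 2 - C ^ 2 * L ^ 2 := by nlinarith [sq_nonneg (C * ρ)]
    have : (G ^ 2 - C ^ 2 * L ^ 2) * (m₁ * m₂) ≤ C ^ 2 * ρ ^ 2 * (a + b + 2) * (m₁ * m₂) :=
      calc (G ^ 2 - C ^ 2 * L ^ 2) * (m₁ * m₂) ≤ (G ^ 2 - C ^ 2 * L ^ 2) * c :=
            mul_le_mul_of_nonneg_left hc hexcess
        _ ≤ C ^ 2 * ρ ^ 2 * (m₁ + m₂) ^ 2 := by linarith
        _ ≤ C ^ 2 * ρ ^ 2 * ((a + b + 2) * (m₁ * m₂)) := by gcongr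
        _ = C ^ 2 * ρ ^ 2 * (a + b + 2) * (m₁ * m₂) := by ring
    nlinarith [le_of_mul_le_mul_right this (mul_pos hm₁ hm₂)]
  have hs := Real.sq_sqrt (by positivity : 0 ≤ a + b + 2)
  refine (pow_le_pow_iff_left₀ hG (by positivity) two_ne_zero).1 (hsq.trans ?_)
  calc C ^ 2 * (L ^ 2 + ρ ^ 2 * (a + b + 2)) = C ^ 2 * (L ^ 2 + (ρ * √(a + b + 2)) ^ 2) := by
        rw [mul_pow, hs]
    _ ≤ C ^ 2 * (L + ρ * √(a + b + 2)) ^ 2 := by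
        gcongr; nlinarith [mul_nonneg (mul_nonneg hL hρ) (Real.sqrt_nonneg (a + b + 2))]
    _ = (C * (L + ρ * √(a + b + 2))) ^ 2 := by ring

theorem norm_sub_le_of_setIntegral_square_le {E F : Type*} [NormedAddCommGroup E]
    [MeasurableSpace E] [BorelSpace E] [ProperSpace E] [NormedAddCommGroup F]
    {μ : Measure E} [IsFiniteMeasure μ] {w : E → F} (hw : Continuous w) {C : ℝ} (hC : 0 ≤ C)
    (hsq : ∀ A : Set E, MeasurableSet A → Bornology.IsBounded A → μ A ≠ 0 →
      ∫ z in A ×ˢ A, ‖w z.1 - w z.2‖ ^ 2 ∂μ.prod μ ≤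
        C ^ 2 * ∫ z in A ×ˢ A, ‖z.1 - z.2‖ ^ 2 ∂μ.prod μ)
    {x y : E} {r η a b : ℝ} (hwx : ∀ u ∈ closedBall x r, ‖w u - w x‖ ≤ η)
    (hwy : ∀ u ∈ closedBall y r, ‖w u - w y‖ ≤ η) (hx : 0 < μ.real (closedBall x r))
    (hy : 0 < μ.real (closedBall y r))
    (hxy : μ.real (closedBall x r) ≤ a * μ.real (closedBall y r))
    (hyx : μ.real (closedBall y r) ≤ b * μ.real (closedBall x r)) :
    ‖w x - w y‖ ≤ 2 * η + C * (‖x - y‖ + 2 * r + 2 * r * √(a + b + 2)) := by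
  have hr : 0 ≤ r := nonempty_closedBall.1 (nonempty_of_measureReal_ne_zero hx.ne')
  set G := ‖w x - w y‖ - 2 * η
  rcases le_or_gt G 0 with hG | hG
  · have : 0 ≤ C * (‖x - y‖ + 2 * r + 2 * r * √(a + b + 2)) := by positivity
    linarith
  suffices G ≤ C * ((‖x - y‖ + 2 * r) + 2 * r * √(a + b + 2)) by linarith
  have hwST : ∀ u ∈ closedBall x r, ∀ v ∈ closedBall y r, G ≤ ‖w u - w v‖ := fun u hu v hv => by
    linarith [hwx u hu, hwy v hv, norm_sub_le_norm_sub_add_norm_sub (w x) (w u) (w y),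
      norm_sub_le_norm_sub_add_norm_sub (w u) (w v) (w y), norm_sub_rev (w x) (w u)]
  have hST : ∀ u ∈ closedBall x r, ∀ v ∈ closedBall y r, ‖u - v‖ ≤ ‖x - y‖ + 2 * r := by
    intro u hu v hv
    rw [mem_closedBall_iff_norm] at hu hv
    linarith [norm_sub_le_norm_sub_add_norm_sub u x v, norm_sub_le_norm_sub_add_norm_sub x y v,
      norm_sub_rev y v]
  have hA0 : μ (closedBall x r ∪ closedBall y r) ≠ 0 := fun h =>
    hx.ne' ((measureReal_eq_zero_iff).2 (measure_mono_null subset_union_left h))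
  have key := sq_mul_measureReal_le_of_setIntegral_le hw measurableSet_closedBall
    measurableSet_closedBall isBounded_closedBall isBounded_closedBall
    (hsq _ (measurableSet_closedBall.union measurableSet_closedBall)
      (isBounded_closedBall.union isBounded_closedBall) hA0) hG.le hwST hST
    (diam_closedBall hr) (diam_closedBall hr)
  refine le_mul_add_mul_sqrt_of_sq_mul_le hG.le (by positivity) (by positivity) hC hx hy ?_
    hxy hyx key
  rw [← measureReal_prod_prod]
  exact measureReal_mono subset_union_left

section withDensity

variable {α : Type*} [MeasurableSpace α] {ν : Measure α} {p : α → ℝ} {s : Set α}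

theorem mul_measureReal_le_measureReal_withDensity (hs : MeasurableSet s) {m : ℝ} (hm : 0 ≤ m)
    (h : ∀ u ∈ s, m ≤ p u) (hs' : ν.withDensity (fun u => ENNReal.ofReal (p u)) s ≠ ∞) :
    m * ν.real s ≤ (ν.withDensity fun u => ENNReal.ofReal (p u)).real s := by
  rw [measureReal_def, measureReal_def, ← ENNReal.toReal_ofReal hm, ← ENNReal.toReal_mul]
  refine ENNReal.toReal_mono hs' ?_
  rw [withDensity_apply _ hs, ← setLIntegral_const]
  exact setLIntegral_mono' hs fun u hu => ENNReal.ofReal_le_ofReal (h u hu)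

theorem measureReal_withDensity_le_mul (hs : MeasurableSet s) {M : ℝ} (hM : 0 ≤ M)
    (h : ∀ u ∈ s, p u ≤ M) (hs' : ν s ≠ ∞) :
    (ν.withDensity fun u => ENNReal.ofReal (p u)).real s ≤ M * ν.real s := by
  rw [measureReal_def, measureReal_def, ← ENNReal.toReal_ofReal hM, ← ENNReal.toReal_mul]
  refine ENNReal.toReal_mono (by finiteness) ?_
  rw [withDensity_apply _ hs, ← setLIntegral_const]
  exact setLIntegral_mono' hs fun u hu => ENNReal.ofReal_le_ofReal (h u hu)

end withDensity

section closedBall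

variable {E : Type*} [NormedAddCommGroup E] [NormedSpace ℝ E] [FiniteDimensional ℝ E]
  [MeasurableSpace E] [BorelSpace E] (μ₀ : Measure E) [μ₀.IsAddHaarMeasure] {p : E → ℝ}
  {x y : E} {r : ℝ}

theorem measureReal_closedBall_withDensity_pos
    [IsFiniteMeasure (μ₀.withDensity fun u => ENNReal.ofReal (p u))] {m : ℝ} (hm : 0 < m)
    (hr : 0 < r) (h : ∀ u ∈ closedBall x r, m ≤ p u) :
    0 < (μ₀.withDensity fun u => ENNReal.ofReal (p u)).real (closedBall x r) :=
  (mul_pos hm (ENNReal.toReal_pos (measure_closedBall_pos μ₀ x hr).ne'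
    measure_closedBall_lt_top.ne)).trans_le
    (mul_measureReal_le_measureReal_withDensity measurableSet_closedBall hm.le h (by finiteness))

theorem measureReal_closedBall_withDensity_le_mul
    [IsFiniteMeasure (μ₀.withDensity fun u => ENNReal.ofReal (p u))] {m M : ℝ} (hm : 0 < m)
    (hM : 0 ≤ M) (hx : ∀ u ∈ closedBall x r, p u ≤ M) (hy : ∀ u ∈ closedBall y r, m ≤ p u) :
    (μ₀.withDensity fun u => ENNReal.ofReal (p u)).real (closedBall x r) ≤
      M / m * (μ₀.withDensity fun u => ENNReal.ofReal (p u)).real (closedBall y r) := by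
  have hV : μ₀.real (closedBall x r) = μ₀.real (closedBall y r) := by
    rw [Measure.addHaar_real_closedBall_center, Measure.addHaar_real_closedBall_center μ₀ y]
  calc _ ≤ M * μ₀.real (closedBall x r) :=
        measureReal_withDensity_le_mul measurableSet_closedBall hM hx measure_closedBall_lt_top.ne
    _ = M / m * (m * μ₀.real (closedBall y r)) := by rw [hV]; field_simp
    _ ≤ _ := by
        gcongr
        exact mul_measureReal_le_measureReal_withDensity measurableSet_closedBall hm.le hy
          (by finiteness)

end closedBall

theorem eventually_forall_closedBall_near {X Y : Type*} [PseudoMetricSpace X]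
    [SeminormedAddCommGroup Y] {w : X → Y} {p : X → ℝ} {z : X} (hw : ContinuousAt w z)
    (hp : ContinuousAt p z) (hpz : 0 < p z) {η : ℝ} (hη : 0 < η) :
    ∀ᶠ r in 𝓝[>] 0, ∀ u ∈ closedBall z r, ‖w u - w z‖ ≤ η ∧ p z / 2 ≤ p u ∧ p u ≤ 2 * p z := by
  have hnear : {u | ‖w u - w z‖ ≤ η ∧ p z / 2 ≤ p u ∧ p u ≤ 2 * p z} ∈ 𝓝 z := by
    filter_upwards [hw.eventually (closedBall_mem_nhds _ hη),
      hp.eventually (Icc_mem_nhds (by linarith : p z / 2 < p z) (by linarith : p z < 2 * p z))]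
      with u hwu hpu
    exact ⟨by rwa [dist_eq_norm] at hwu, hpu⟩
  exact (eventually_closedBall_subset hnear).filter_mono nhdsWithin_le_nhds

namespace L2LipschitzOnCouplings

theorem norm_sub_le {E F : Type} [NormedAddCommGroup E] [NormedSpace ℝ E] [FiniteDimensional ℝ E]
    [MeasurableSpace E] [BorelSpace E] [NormedAddCommGroup F] {μ : Measure E}
    [IsProbabilityMeasure μ] {w : E → F} {C : ℝ} (h : L2LipschitzOnCouplings μ w C)
    (hμ2 : MemLp id 2 μ) {μ₀ : Measure E} [μ₀.IsAddHaarMeasure] {p : E → ℝ}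
    (hμ : μ = μ₀.withDensity fun u => ENNReal.ofReal (p u)) (hp : Continuous p)
    (hpos : ∀ u, 0 < p u) (hw : Continuous w) (hC : 0 ≤ C) (x y : E) :
    ‖w x - w y‖ ≤ C * ‖x - y‖ := by
  have hsq := h.setIntegral_square_le hμ2 hw
  subst hμ
  set a := 2 * p x / (p y / 2)
  set b := 2 * p y / (p x / 2)
  set M := 2 + 2 * C * (1 + √(a + b + 2))
  have key : ∀ η > 0, ‖w x - w y‖ ≤ C * ‖x - y‖ + η * M := by
    intro η hη
    obtain ⟨r, ⟨hbx, hby⟩, hr, hrη⟩ := (((eventually_forall_closedBall_near hw.continuousAt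
      hp.continuousAt (hpos x) hη).and (eventually_forall_closedBall_near hw.continuousAt
      hp.continuousAt (hpos y) hη)).and (Ioc_mem_nhdsGT hη)).exists
    have hbound := norm_sub_le_of_setIntegral_square_le hw hC hsq (a := a) (b := b)
      (fun u hu => (hbx u hu).1) (fun u hu => (hby u hu).1)
      (measureReal_closedBall_withDensity_pos μ₀ (half_pos (hpos x)) hr
        fun u hu => (hbx u hu).2.1)
      (measureReal_closedBall_withDensity_pos μ₀ (half_pos (hpos y)) hr
        fun u hu => (hby u hu).2.1)
      (measureReal_closedBall_withDensity_le_mul μ₀ (half_pos (hpos y)) (by linarith [hpos x])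
        (fun u hu => (hbx u hu).2.2) fun u hu => (hby u hu).2.1)
      (measureReal_closedBall_withDensity_le_mul μ₀ (half_pos (hpos x)) (by linarith [hpos y])
        (fun u hu => (hby u hu).2.2) fun u hu => (hbx u hu).2.1)
    have hrη' := mul_le_mul_of_nonneg_left hrη (by positivity : 0 ≤ C * (1 + √(a + b + 2)))
    nlinarith
  have hM : 0 < M := by positivity
  refine le_of_forall_pos_le_add fun ε hε => ?_
  simpa [div_mul_cancel₀ ε hM.ne'] using key (ε / M) (by positivity)

end L2LipschitzOnCouplings

/-- Let `μ` be a Borel probability measure on `ℝ^d` with a strictly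
positive `C¹` density `p` such that `p` and its derivative decay exponentially at infinity.
Let `w : ℝ^d → ℝ^d` be continuously differentiable, and suppose there is a constant `C` such
that `E[|w(ξ) − w(ξ')|²] ≤ C² E[|ξ − ξ'|²]` for every pair of square-integrable random
variables `ξ, ξ'` with law `μ` defined on a common atomless probability space. Then
`|Dw(x)e| ≤ C` for every `x` and every unit vector `e`; in particular `w` is `C`-Lipschitz. -/
theorem lipschitz_of_coupling_L2_bound
    {d : ℕ} (μ : Measure (Rd d)) [IsProbabilityMeasure μ]
    (p : Rd d → ℝ)
    (hdensity : μ = volume.withDensity fun x => ENNReal.ofReal (p x))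
    (hpos : ∀ x, 0 < p x)
    (hC1p : ContDiff ℝ 1 p)
    (hdecay : ∃ c ε : ℝ, 0 < c ∧ 0 < ε ∧ ∀ x : Rd d,
      p x ≤ c * Real.exp (-ε * ‖x‖) ∧ ‖fderiv ℝ p x‖ ≤ c * Real.exp (-ε * ‖x‖))
    (w : Rd d → Rd d) (hw : ContDiff ℝ 1 w)
    (C : ℝ) (hC : 0 ≤ C)
    (hL2 : ∀ (Ω : Type) (_ : MeasurableSpace Ω) (P : Measure Ω),
      IsProbabilityMeasure P → AtomlessMeasure P →
      ∀ ξ ξ' : Ω → Rd d, Measurable ξ → Measurable ξ' → MemLp ξ 2 P → MemLp ξ' 2 P →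
        Measure.map ξ P = μ → Measure.map ξ' P = μ →
        ∫ ω, ‖w (ξ ω) - w (ξ' ω)‖ ^ 2 ∂P ≤ C ^ 2 * ∫ ω, ‖ξ ω - ξ' ω‖ ^ 2 ∂P) :
    (∀ (x e : Rd d), ‖e‖ = 1 → ‖fderiv ℝ w x e‖ ≤ C) ∧
    (∀ x y : Rd d, ‖w x - w y‖ ≤ C * ‖x - y‖) := by
  obtain ⟨c, ε, -, hε, hdec⟩ := hdecay
  have hμ2 : MemLp id 2 μ := hdensity ▸ memLp_two_id_withDensity_of_le_exp volume
    hC1p.continuous.measurable (fun x => (hpos x).le) hε fun x => (hdec x).1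
  have hlip := L2LipschitzOnCouplings.norm_sub_le hL2 hμ2 hdensity hC1p.continuous hpos
    hw.continuous hC
  refine ⟨fun x e he => ?_, hlip⟩
  calc ‖fderiv ℝ w x e‖ ≤ ‖fderiv ℝ w x‖ * ‖e‖ := (fderiv ℝ w x).le_opNorm e
    _ ≤ C := by
        rw [he, mul_one]
        exact norm_fderiv_le_of_lip' ℝ hC (.of_forall fun y => hlip y x)
end
end
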